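/- arXiv:math/0501166 — 6 statements merged into one kernel-verified Lean document; each statement's English description precedes it below -/
import Mathlib

section
/- The quotient of the category of abelian groups by the Serre subcategory of torsion abelian groups is equivalent to the category of rational vector spaces. In particular, Hom in the quotient category between Z and Z equals Q, computed as the colimit over n of Hom(nZ, Z). -/
open CategoryTheory

/-- The class of morphisms of abelian groups whose kernel and cokernel are torsion:
these are precisely the morphisms inverted by the quotient functor
`Ab → Ab/(torsion groups)`. -/
def torsionW : MorphismProperty AddCommGrpCat.{0} := fun _ Y f =>
  AddMonoid.IsTorsion f.hom.ker ∧ AddMonoid.IsTorsion (Y ⧸ f.hom.range)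

/-!
`ℚ ⊗[ℤ] -` is left adjoint to the fully faithful forgetful functor `Mod ℚ ⥤ Ab`, hence it is a
localization at the class of morphisms it inverts. As `ℚ` is the localization of `ℤ` at the
nonzero integers, `ℚ ⊗ f` is bijective exactly when every element of `ker f` and of `coker f` is
killed by a nonzero integer, i.e. when `f ∈ torsionW`. The Hom-set between the images of `ℤ` is
then `Hom_ℚ(ℚ, ℚ) = ℚ`.
-/

open TensorProduct

universe u

namespace IsLocalizedModule

variable {R M M' N N' : Type*} [CommSemiring R] (S : Submonoid R)

section AddCommGroup

variable [AddCommGroup M] [AddCommGroup M'] [AddCommGroup N] [AddCommGroup N']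
  [Module R M] [Module R M'] [Module R N] [Module R N']
  {f : M →ₗ[R] M'} {f' : N →ₗ[R] N'} [IsLocalizedModule S f] [IsLocalizedModule S f']
  {g : M →ₗ[R] N} {h : M' →ₗ[R] N'}

theorem injective_iff_of_comp_eq (H : h ∘ₗ f = f' ∘ₗ g) :
    Function.Injective h ↔ ∀ m, g m = 0 → ∃ r ∈ S, r • m = 0 := by
  have hfg (m : M) : h (f m) = f' (g m) := LinearMap.congr_fun H m
  simp_rw [← mem_ker_iff S (g := f), LinearMap.mem_ker]
  refine ⟨fun hinj m hm => hinj (by rw [hfg, hm, map_zero, map_zero]), fun htors => ?_⟩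
  refine injective_of_map_zero S f fun m hm => ?_
  obtain ⟨r, hr, hrm⟩ := (mem_ker_iff S (g := f')).mp (by rwa [← hfg] : f' (g m) = 0)
  obtain ⟨t, ht, htm⟩ := (mem_ker_iff S (g := f)).mp (htors (r • m) (by rw [map_smul, hrm]))
  exact (mem_ker_iff S).mpr ⟨t * r, S.mul_mem ht hr, by rw [mul_smul, htm]⟩

end AddCommGroup

variable [AddCommMonoid M] [AddCommMonoid M'] [AddCommMonoid N] [AddCommMonoid N']
  [Module R M] [Module R M'] [Module R N] [Module R N']
  {f : M →ₗ[R] M'} {f' : N →ₗ[R] N'} [IsLocalizedModule S f] [IsLocalizedModule S f']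
  {g : M →ₗ[R] N} {h : M' →ₗ[R] N'}

theorem surjective_iff_of_comp_eq (H : h ∘ₗ f = f' ∘ₗ g) :
    Function.Surjective h ↔ ∀ n, ∃ r ∈ S, r • n ∈ LinearMap.range g := by
  have hfg (m : M) : h (f m) = f' (g m) := LinearMap.congr_fun H m
  constructor
  · intro hsurj n
    obtain ⟨x, hx⟩ := hsurj (f' n)
    obtain ⟨⟨m, s⟩, hms : s • x = f m⟩ := surj S f x
    obtain ⟨c, hc⟩ := exists_of_eq (S := S) (show f' ((s : R) • n) = f' (g m) by
      rw [map_smul, ← hfg, ← hms, Submonoid.smul_def, map_smul, hx])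
    refine ⟨c * s, S.mul_mem c.2 s.2, (c : R) • m, ?_⟩
    simp only [Submonoid.smul_def] at hc
    rw [map_smul, ← hc, mul_smul]
  · intro hrange y
    obtain ⟨⟨n, s⟩, rfl⟩ := mk'_surjective S f' y
    obtain ⟨r, hr, m, hm⟩ := hrange n
    -- `g m = r • n` makes `mk' f m (r * s)` a preimage of `mk' f' n s`
    refine ⟨mk' f m (⟨r, hr⟩ * s), (smul_inj f' (⟨r, hr⟩ * s) _ _).mp ?_⟩
    rw [Submonoid.smul_def, ← map_smul, ← Submonoid.smul_def, mk'_cancel', hfg, hm,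
      Function.uncurry_apply_pair, mul_smul, mk'_cancel', Submonoid.smul_def, map_smul]

end IsLocalizedModule

theorem LinearMap.baseChange_bijective_iff_of_isLocalization {R A M N : Type*} [CommRing R]
    [CommRing A] [Algebra R A] (S : Submonoid R) [IsLocalization S A]
    [AddCommGroup M] [AddCommGroup N] [Module R M] [Module R N] (g : M →ₗ[R] N) :
    Function.Bijective (g.baseChange A) ↔
      (∀ m, g m = 0 → ∃ r ∈ S, r • m = 0) ∧ ∀ n, ∃ r ∈ S, r • n ∈ LinearMap.range g :=
  have H : (g.baseChange A).restrictScalars R ∘ₗ TensorProduct.mk R A M 1 =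
      TensorProduct.mk R A N 1 ∘ₗ g := rfl
  and_congr (IsLocalizedModule.injective_iff_of_comp_eq S H)
    (IsLocalizedModule.surjective_iff_of_comp_eq S H)

theorem isAddTorsion_iff_forall_mem_nonZeroDivisors_zsmul {A : Type*} [AddCommGroup A]
    (H : AddSubgroup A) :
    IsAddTorsion H ↔ ∀ a ∈ H, ∃ r ∈ nonZeroDivisors ℤ, r • a = 0 := by
  simp [IsAddTorsion, isOfFinAddOrder_iff_zsmul_eq_zero, mem_nonZeroDivisors_iff_ne_zero,
    Subtype.ext_iff]

theorem isAddTorsion_quotient_iff_forall_mem_nonZeroDivisors_zsmul {A : Type*} [AddCommGroup A]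
    (H : AddSubgroup A) :
    IsAddTorsion (A ⧸ H) ↔ ∀ a, ∃ r ∈ nonZeroDivisors ℤ, r • a ∈ H := by
  simp [IsAddTorsion, isOfFinAddOrder_iff_zsmul_eq_zero, mem_nonZeroDivisors_iff_ne_zero,
    QuotientAddGroup.forall_mk, ← QuotientAddGroup.mk_zsmul]

namespace AddCommGrpCat

noncomputable abbrev rationalization : AddCommGrpCat.{u} ⥤ ModuleCat.{u} ℚ where
  obj X := ModuleCat.of ℚ (ℚ ⊗[ℤ] X)
  map f := ModuleCat.ofHom (f.hom.toIntLinearMap.baseChange ℚ)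
  map_id X := ModuleCat.hom_ext (LinearMap.baseChange_id (R := ℤ) (A := ℚ) (M := X))
  map_comp f g := ModuleCat.hom_ext
    (LinearMap.baseChange_comp f.hom.toIntLinearMap g.hom.toIntLinearMap)

noncomputable def rationalizationAdj :
    rationalization ⊣ forget₂ (ModuleCat.{u} ℚ) AddCommGrpCat.{u} :=
  Adjunction.mkOfHomEquiv
    { homEquiv X N :=
        { toFun φ := ofHom ((φ.hom.restrictScalars ℤ ∘ₗ TensorProduct.mk ℤ ℚ X 1).toAddMonoidHom)
          invFun ψ := ModuleCat.ofHom ((show X →+ N from ψ.hom).toIntLinearMap.liftBaseChange ℚ)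
          left_inv φ := by
            ext : 1
            apply TensorProduct.AlgebraTensorModule.ext
            intro a x
            change a • φ.hom (1 ⊗ₜ x) = φ.hom (a ⊗ₜ x)
            rw [← map_smul, smul_tmul', smul_eq_mul, mul_one]
          right_inv ψ := by
            ext x
            exact one_smul ℚ ((show X →+ N from ψ.hom) x) }
      homEquiv_naturality_left_symm f g := by
        ext : 1
        apply TensorProduct.AlgebraTensorModule.ext
        intro a x
        rfl
      homEquiv_naturality_right f g := rfl }

instance : (forget₂ (ModuleCat.{u} ℚ) AddCommGrpCat.{u}).Full where
  map_surjective {M N} f := ⟨ModuleCat.ofHom (show M →+ N from f.hom).toRatLinearMap, rfl⟩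

theorem isIso_rationalization_map_iff {X Y : AddCommGrpCat.{u}} (f : X ⟶ Y) :
    IsIso (rationalization.map f) ↔ IsAddTorsion f.hom.ker ∧ IsAddTorsion (Y ⧸ f.hom.range) := by
  rw [ConcreteCategory.isIso_iff_bijective, isAddTorsion_iff_forall_mem_nonZeroDivisors_zsmul,
    isAddTorsion_quotient_iff_forall_mem_nonZeroDivisors_zsmul]
  exact LinearMap.baseChange_bijective_iff_of_isLocalization (nonZeroDivisors ℤ)
    f.hom.toIntLinearMap

end AddCommGrpCat

open AddCommGrpCat

theorem torsionW_eq_inverseImage_isomorphisms :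
    torsionW = (MorphismProperty.isomorphisms (ModuleCat.{0} ℚ)).inverseImage rationalization := by
  ext X Y f
  exact (isIso_rationalization_map_iff f).symm

instance : rationalization.IsLocalization torsionW := by
  rw [torsionW_eq_inverseImage_isomorphisms]
  exact rationalizationAdj.isLocalization

/-- The quotient of the category of abelian groups by the Serre subcategory of torsion
abelian groups (realized as the localization at the morphisms with torsion kernel and
cokernel) is equivalent to the category of rational vector spaces.  In particular, the
Hom-set in the quotient category between `ℤ` and `ℤ` is `ℚ` (computed as the colimit
over `n` of `Hom(nℤ, ℤ) = (1/n)ℤ`). -/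
theorem ab_quotient_torsion_equiv_rat_modules :
    Nonempty (torsionW.Localization ≌ ModuleCat.{0} ℚ) ∧
    Nonempty ((torsionW.Q.obj (AddCommGrpCat.of ℤ) ⟶ torsionW.Q.obj (AddCommGrpCat.of ℤ)) ≃ ℚ) := by
  refine ⟨⟨Localization.uniq torsionW.Q rationalization torsionW⟩, ⟨?_⟩⟩
  calc (torsionW.Q.obj (of ℤ) ⟶ torsionW.Q.obj (of ℤ))
      ≃ (rationalization.obj (of ℤ) ⟶ rationalization.obj (of ℤ)) :=
        Localization.homEquiv torsionW torsionW.Q rationalization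
    _ ≃ (of ℤ ⟶ of (ℚ ⊗[ℤ] ℤ)) := rationalizationAdj.homEquiv _ _
    _ ≃ (ℤ →+ ℚ ⊗[ℤ] ℤ) := ConcreteCategory.homEquiv (C := AddCommGrpCat)
    _ ≃ ℚ ⊗[ℤ] ℤ := (zmultiplesHom _).symm
    _ ≃ ℚ := (TensorProduct.rid ℤ ℚ).toEquiv
end

section
/- Let A be an abelian category and P an object such that every nonzero subobject N of P satisfies N ≻ P (i.e., P is a subquotient of a finite coproduct of copies of N). Then the full subcategory ⟨P⟩ of objects M with M ⊁ P is closed under subobjects, quotients, and extensions (i.e., is a thick/Serre subcategory). -/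
open CategoryTheory CategoryTheory.Limits

/-- `X ≻ Y`: `Y` is a subquotient of a finite coproduct of copies of `X`, i.e. there is
an object `U` with a monomorphism `U ↪ X^{⊕n}` and an epimorphism `U ↠ Y`. -/
def Dominates {C : Type u} [Category.{v} C] [Abelian C] (X Y : C) : Prop :=
  ∃ (n : ℕ) (U : C) (i : U ⟶ ∐ fun _ : Fin n => X) (p : U ⟶ Y), Mono i ∧ Epi p

attribute [local instance] CategoryTheory.Abelian.hasFiniteBiproducts

namespace BracketThickAux

variable {C : Type u} [Category.{v} C] [Abelian C]

/-- Biproduct version of `Dominates`. -/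
def Dom (X Y : C) : Prop :=
  ∃ (n : ℕ) (U : C) (i : U ⟶ ⨁ fun _ : Fin n => X) (p : U ⟶ Y), Mono i ∧ Epi p

theorem dominates_iff_dom (X Y : C) : Dominates X Y ↔ Dom X Y := by
  constructor
  · rintro ⟨n, U, i, p, hi, hp⟩
    exact ⟨n, U, i ≫ (biproduct.isoCoproduct _).inv, p, @mono_comp _ _ _ _ _ _ hi _ _, hp⟩
  · rintro ⟨n, U, i, p, hi, hp⟩
    exact ⟨n, U, i ≫ (biproduct.isoCoproduct _).hom, p, @mono_comp _ _ _ _ _ _ hi _ _, hp⟩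

theorem Dom.of_mono {M N Y : C} (f : N ⟶ M) [Mono f] (h : Dom N Y) : Dom M Y := by
  obtain ⟨n, U, i, p, hi, hp⟩ := h
  haveI := hi
  exact ⟨n, U, i ≫ biproduct.map (fun _ => f), p, mono_comp _ _, hp⟩

theorem Dom.of_epi {M N Y : C} (f : M ⟶ N) [Epi f] (h : Dom N Y) : Dom M Y := by
  obtain ⟨n, U, i, p, hi, hp⟩ := h
  haveI := hi; haveI := hp
  refine ⟨n, pullback (biproduct.map fun _ : Fin n => f) i,
    pullback.fst _ _, pullback.snd _ _ ≫ p, inferInstance, ?_⟩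
  haveI : Epi (pullback.snd (biproduct.map fun _ : Fin n => f) i) := inferInstance
  exact epi_comp _ _

/-- The flattening of a nested biproduct of copies of `X` into a single biproduct. -/
noncomputable def flat (X : C) (m n : ℕ) :
    (⨁ fun _ : Fin m => ⨁ fun _ : Fin n => X) ⟶ ⨁ fun _ : Fin (m * n) => X :=
  biproduct.lift fun t =>
    biproduct.π _ ((finProdFinEquiv.symm t).1) ≫ biproduct.π _ ((finProdFinEquiv.symm t).2)

instance flat_mono (X : C) (m n : ℕ) : Mono (flat X m n) := by
  refine ⟨fun {T} u v h => ?_⟩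
  apply biproduct.hom_ext; intro j
  apply biproduct.hom_ext; intro k
  have e : finProdFinEquiv.symm (finProdFinEquiv (j, k)) = (j, k) :=
    Equiv.symm_apply_apply _ _
  have h2 := congrArg (fun w => w ≫ biproduct.π _ (finProdFinEquiv (j, k))) h
  simp only [flat, Category.assoc, biproduct.lift_π] at h2
  rw [e] at h2
  simpa using h2

theorem Dom.trans {X Y Z : C} (h1 : Dom X Y) (h2 : Dom Y Z) : Dom X Z := by
  obtain ⟨n, U, i, p, hi, hp⟩ := h1
  obtain ⟨m, V, j, q, hj, hq⟩ := h2
  haveI := hi; haveI := hp; haveI := hj; haveI := hq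
  let pm : (⨁ fun _ : Fin m => U) ⟶ ⨁ fun _ : Fin m => Y := biproduct.map fun _ => p
  refine ⟨m * n, pullback pm j,
    pullback.fst pm j ≫ biproduct.map (fun _ => i) ≫ flat X m n,
    pullback.snd pm j ≫ q, ?_, ?_⟩
  · haveI : Mono (pullback.fst pm j) := inferInstance
    exact mono_comp _ _
  · haveI : Epi (pullback.snd pm j) := inferInstance
    exact epi_comp _ _

end BracketThickAux

open BracketThickAux

/-- Let `A` be an abelian category and `P` an object such that every nonzero subobject
`N` of `P` satisfies `N ≻ P`.  Then the full subcategory `⟨P⟩` of objects `M` with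
`M ⊁ P` is closed under subobjects, quotients and extensions (i.e., is a thick/Serre
subcategory). -/
theorem bracket_is_thick {C : Type u} [Category.{v} C] [Abelian C] (P : C)
    (hP : ∀ (N : C) (i : N ⟶ P), Mono i → ¬ IsZero N → Dominates N P) :
    (∀ (M N : C) (i : N ⟶ M), Mono i → ¬ Dominates M P → ¬ Dominates N P) ∧
    (∀ (M N : C) (p : M ⟶ N), Epi p → ¬ Dominates M P → ¬ Dominates N P) ∧
    (∀ S : ShortComplex C, S.ShortExact →
      ¬ Dominates S.X₁ P → ¬ Dominates S.X₃ P → ¬ Dominates S.X₂ P) := by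
  refine ⟨?_, ?_, ?_⟩
  · intro M N f hf hM hN
    rw [dominates_iff_dom] at hM hN
    exact hM (haveI := hf; hN.of_mono f)
  · intro M N f hf hM hN
    rw [dominates_iff_dom] at hM hN
    exact hM (haveI := hf; hN.of_epi f)
  · intro S hse h1 h3 h2
    rw [dominates_iff_dom] at h1 h2 h3
    haveI := hse.mono_f
    haveI := hse.epi_g
    obtain ⟨n, U, i, p, hi, hp⟩ := h2
    haveI := hi; haveI := hp
    -- the map to the biproduct of copies of `X₃`
    let g' : (⨁ fun _ : Fin n => S.X₂) ⟶ ⨁ fun _ : Fin n => S.X₃ :=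
      biproduct.map fun _ => S.g
    let h : U ⟶ ⨁ fun _ : Fin n => S.X₃ := i ≫ g'
    let q : kernel h ⟶ P := kernel.ι h ≫ p
    by_cases hz : IsZero (image q)
    · -- the image of the "kernel part" in `P` is zero, so `P` is a subquotient of `X₃^n`
      apply h3
      have hq0 : q = 0 := by
        rw [← image.fac q, hz.eq_of_src (image.ι q) 0, comp_zero]
      let d : Abelian.coimage h ⟶ P := cokernel.desc (kernel.ι h) p hq0
      have hd : cokernel.π (kernel.ι h) ≫ d = p := cokernel.π_desc _ _ _
      haveI : Epi (cokernel.π (kernel.ι h) ≫ d) := by rw [hd]; exact hp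
      haveI : Epi d := epi_of_epi (cokernel.π (kernel.ι h)) d
      exact ⟨n, Abelian.coimage h, Abelian.factorThruCoimage h, d, inferInstance, inferInstance⟩
    · -- otherwise `N := image q` is a nonzero subobject of `P`, so `N ≻ P`, and `X₁ ≻ N`
      apply h1
      have hNP : Dom (image q) P := by
        rw [← dominates_iff_dom]
        exact hP (image q) (image.ι q) inferInstance hz
      refine Dom.trans ?_ hNP
      -- construct a mono from `kernel h` into `X₁^n`
      have hlim := hse.exact.fIsKernel
      have key : ∀ j : Fin n,
          (kernel.ι h ≫ i ≫ biproduct.π (fun _ : Fin n => S.X₂) j) ≫ S.g = 0 := by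
        intro j
        have : biproduct.π (fun _ : Fin n => S.X₂) j ≫ S.g
            = g' ≫ biproduct.π (fun _ : Fin n => S.X₃) j := by
          simp [g']
        rw [Category.assoc, Category.assoc, this, ← Category.assoc, ← Category.assoc]
        have : (kernel.ι h ≫ i) ≫ g' = 0 := by
          rw [Category.assoc]
          exact kernel.condition h
        rw [this, zero_comp]
      let c : ∀ j : Fin n, { l : kernel h ⟶ S.X₁ // l ≫ S.f =
          kernel.ι h ≫ i ≫ biproduct.π (fun _ : Fin n => S.X₂) j } :=
        fun j => KernelFork.IsLimit.lift' hlim _ (key j)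
      let φ : kernel h ⟶ ⨁ fun _ : Fin n => S.X₁ := biproduct.lift fun j => (c j).1
      have hfac : φ ≫ biproduct.map (fun _ : Fin n => S.f) = kernel.ι h ≫ i := by
        apply biproduct.hom_ext; intro j
        simp [φ, (c j).2]
      haveI : Mono (φ ≫ biproduct.map (fun _ : Fin n => S.f)) := by
        rw [hfac]; exact mono_comp _ _
      haveI : Mono φ := mono_of_mono φ (biproduct.map (fun _ : Fin n => S.f))
      exact ⟨n, kernel h, φ, factorThruImage q, inferInstance, inferInstance⟩
end

section
/- Let A be a Grothendieck category and P ∈ Spec(A). Then the quotient category A/⟨P⟩ is local, i.e., the image of P under the quotient functor is a quasi-final object: every nonzero object X of A/⟨P⟩ satisfies X ≻ Q(P). -/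
open CategoryTheory CategoryTheory.Limits

/-- Let `A` be a Grothendieck category (cocomplete abelian with exact filtered colimits
and a separator) and `P ∈ Spec(A)`, i.e. `P` is nonzero and every nonzero subobject `N`
of `P` satisfies `N ≻ P`.  Let `Q : A ⥤ D` be the exact localization (quotient) functor
by the Serre subcategory `⟨P⟩ = {M : M ⊁ P}`: it is exact, essentially surjective, and
kills exactly the objects of `⟨P⟩`.  Then the quotient category `A/⟨P⟩` is local: the
image `Q(P)` is quasi-final, i.e. every nonzero object `X` of `A/⟨P⟩` satisfies
`X ≻ Q(P)`. -/
theorem quotient_by_spectrum_point_is_local {C : Type u} {D : Type u'}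
    [Category.{v} C] [Category.{v'} D] [Abelian C] [Abelian D]
    [HasColimits C] [AB5 C] [HasSeparator C]
    (P : C) (hP0 : ¬ IsZero P)
    (hP : ∀ (N : C) (i : N ⟶ P), Mono i → ¬ IsZero N → Dominates N P)
    (Q : C ⥤ D) [Q.Additive] [PreservesFiniteLimits Q] [PreservesFiniteColimits Q]
    [Q.EssSurj] (hker : ∀ M : C, IsZero (Q.obj M) ↔ ¬ Dominates M P) :
    ∀ X : D, ¬ IsZero X → Dominates X (Q.obj P) := by
  intro X hX
  obtain ⟨M, ⟨e⟩⟩ : ∃ M : C, Nonempty (Q.obj M ≅ X) := ⟨Q.objPreimage X, ⟨Q.objObjPreimageIso X⟩⟩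
  have hQM : ¬ IsZero (Q.obj M) := fun h => hX (h.of_iso e.symm)
  have hM : Dominates M P := by
    by_contra h
    exact hQM ((hker M).mpr h)
  obtain ⟨n, U, i, p, hi, hp⟩ := hM
  refine ⟨n, Q.obj U,
    Q.map i ≫ inv (sigmaComparison Q (fun _ : Fin n => M)) ≫ (Sigma.mapIso fun _ => e).hom,
    Q.map p, ?_, ?_⟩
  · have : Mono (Q.map i) := Q.map_mono i
    exact mono_comp _ _
  · exact Q.map_epi p
end

section
/- The Gabriel product of topologizing subcategories is associative: S • (T • U) = (S • T) • U, and the zero subcategory is a two-sided unit: 0 • S = S = S • 0. -/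
open CategoryTheory CategoryTheory.Limits

variable {C : Type u} [Category.{v} C] [Abelian C]

/-- A full subcategory (given by a predicate on objects) is topologizing if it contains
the zero objects and is closed under subobjects, quotient objects and finite
coproducts. -/
structure IsTopologizing (T : C → Prop) : Prop where
  zero : ∀ X : C, IsZero X → T X
  sub : ∀ ⦃X Y : C⦄ (i : X ⟶ Y), Mono i → T Y → T X
  quot : ∀ ⦃X Y : C⦄ (p : X ⟶ Y), Epi p → T X → T Y
  coprod : ∀ X Y : C, T X → T Y → T (X ⊞ Y)

/-- The Gabriel product `S • T`: objects `M` admitting a short exact sequence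
`0 → M' → M → M'' → 0` with `M' ∈ T` and `M'' ∈ S`. -/
def GabrielProd (S T : C → Prop) (M : C) : Prop :=
  ∃ (X₁ X₃ : C) (i : X₁ ⟶ M) (p : M ⟶ X₃) (w : i ≫ p = 0),
    (ShortComplex.mk i p w).ShortExact ∧ T X₁ ∧ S X₃

/-!
Associativity is the third isomorphism theorem: given `A₁ ⊆ A ⊆ M` with `A₁ ∈ U`, `A/A₁ ∈ T` and
`M/A ∈ S`, the subobject `A₁ ⊆ M` has quotient `M/A₁`, an extension of `M/A` by `A/A₁`. The
reverse inclusion is the same argument in `Cᵒᵖ`, where Gabriel products are taken in the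
opposite order. For the unit laws: a short exact sequence with zero third (first) term has an
epimorphism (a monomorphism) as its remaining map.
-/

open Opposite Abelian Abelian.Pseudoelement
open scoped Pseudoelement

lemma exists_shortExact_cokernel_comp {A₁ A A₃ M X₃ : C} {i₁ : A₁ ⟶ A} {p₁ : A ⟶ A₃}
    {i : A ⟶ M} {p : M ⟶ X₃} {w₁ : i₁ ≫ p₁ = 0} {w : i ≫ p = 0}
    (h₁ : (ShortComplex.mk i₁ p₁ w₁).ShortExact) (h : (ShortComplex.mk i p w).ShortExact) :
    ∃ (u : A₃ ⟶ cokernel (i₁ ≫ i)) (v : cokernel (i₁ ≫ i) ⟶ X₃) (w' : u ≫ v = 0),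
      (ShortComplex.mk u v w').ShortExact := by
  have : Epi p₁ := h₁.epi_g
  have : Mono i := h.mono_f
  have : Epi p := h.epi_g
  let π := cokernel.π (i₁ ≫ i)
  obtain ⟨u, hu⟩ := CokernelCofork.IsColimit.desc' h₁.gIsCokernel (i ≫ π)
    (by rw [← Category.assoc, cokernel.condition])
  replace hu : p₁ ≫ u = i ≫ π := hu
  let v := cokernel.desc (i₁ ≫ i) p (by rw [Category.assoc, w, comp_zero])
  have hv : π ≫ v = p := cokernel.π_desc _ _ _
  have huv : u ≫ v = 0 := by
    rw [← cancel_epi p₁, ← Category.assoc, hu, Category.assoc, hv, w, comp_zero]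
  have hπ : (ShortComplex.mk _ π _).Exact := ShortComplex.cokernelSequence_exact (i₁ ≫ i)
  refine ⟨u, v, huv, { exact := ?_, mono_f := ?_, epi_g := epi_of_epi_fac hv }⟩
  · refine exact_of_pseudo_exact _ fun m hm => ?_
    obtain ⟨x, rfl⟩ := pseudo_surjective_of_epi π m
    obtain ⟨a, rfl⟩ := pseudo_exact_of_exact h.exact x
      (by rwa [← Pseudoelement.comp_apply, hv] at hm)
    exact ⟨p₁ a, by rw [← Pseudoelement.comp_apply, hu, Pseudoelement.comp_apply]⟩
  · refine mono_of_zero_of_map_zero _ fun a ha => ?_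
    obtain ⟨a, rfl⟩ := pseudo_surjective_of_epi p₁ a
    obtain ⟨b, hb⟩ := pseudo_exact_of_exact hπ (i a)
      (by rwa [← Pseudoelement.comp_apply, ← hu, Pseudoelement.comp_apply])
    obtain rfl : i₁ b = a := pseudo_injective_of_mono i (by rwa [← Pseudoelement.comp_apply])
    rw [← Pseudoelement.comp_apply, w₁, Pseudoelement.zero_apply]

namespace GabrielProd

variable {S T U : C → Prop} {M : C}

lemma imp {S' T' : C → Prop} (hS : ∀ X, S X → S' X) (hT : ∀ X, T X → T' X) :
    GabrielProd S T M → GabrielProd S' T' M := by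
  rintro ⟨X₁, X₃, i, p, w, hse, hX₁, hX₃⟩
  exact ⟨X₁, X₃, i, p, w, hse, hT _ hX₁, hS _ hX₃⟩

lemma of_mono {X : C} (i : X ⟶ M) [Mono i] (hX : T X) (hcoker : S (cokernel i)) :
    GabrielProd S T M :=
  ⟨X, cokernel i, i, cokernel.π i, cokernel.condition i,
    { exact := ShortComplex.cokernelSequence_exact i }, hX, hcoker⟩

lemma of_epi {X : C} (p : M ⟶ X) [Epi p] (hker : T (kernel p)) (hX : S X) :
    GabrielProd S T M :=
  ⟨kernel p, X, kernel.ι p, p, kernel.condition p,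
    { exact := ShortComplex.kernelSequence_exact p }, hker, hX⟩

lemma op_iff :
    GabrielProd S T M ↔ GabrielProd (fun X : Cᵒᵖ => T X.unop) (fun X => S X.unop) (op M) := by
  constructor
  · rintro ⟨X₁, X₃, i, p, w, hse, hX₁, hX₃⟩
    exact ⟨op X₃, op X₁, p.op, i.op, by rw [← op_comp, w, op_zero], hse.op, hX₃, hX₁⟩
  · rintro ⟨X₁, X₃, i, p, w, hse, hX₁, hX₃⟩
    exact ⟨X₃.unop, X₁.unop, p.unop, i.unop, by rw [← unop_comp, w, unop_zero], hse.unop, hX₃, hX₁⟩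

lemma assoc_of_left (h : GabrielProd S (GabrielProd T U) M) :
    GabrielProd (GabrielProd S T) U M := by
  obtain ⟨A, X₃, i, p, w, hse, ⟨A₁, A₃, i₁, p₁, w₁, hse₁, hA₁, hA₃⟩, hX₃⟩ := h
  have : Mono i₁ := hse₁.mono_f
  have : Mono i := hse.mono_f
  obtain ⟨u, v, w', hse'⟩ := exists_shortExact_cokernel_comp hse₁ hse
  exact of_mono (i₁ ≫ i) hA₁ ⟨A₃, X₃, u, v, w', hse', hA₃, hX₃⟩

lemma assoc_of_right (h : GabrielProd (GabrielProd S T) U M) :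
    GabrielProd S (GabrielProd T U) M :=
  op_iff.2 <| imp (fun _ hX => op_iff.2 hX) (fun _ hX => hX) <|
    assoc_of_left <| imp (fun _ hX => hX) (fun _ hX => op_iff.1 hX) (op_iff.1 h)

lemma assoc : GabrielProd S (GabrielProd T U) M ↔ GabrielProd (GabrielProd S T) U M :=
  ⟨assoc_of_left, assoc_of_right⟩

lemma zero_left_iff (hS : ∀ ⦃X Y : C⦄ (p : X ⟶ Y), Epi p → S X → S Y) :
    GabrielProd IsZero S M ↔ S M := by
  refine ⟨fun ⟨X₁, X₃, i, p, w, hse, hX₁, hX₃⟩ => ?_, fun hM => ?_⟩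
  · have : Epi i := (ShortComplex.exact_iff_epi _ (hX₃.eq_of_tgt p 0)).1 hse.exact
    exact hS i this hX₁
  · exact of_mono (𝟙 M) hM (isZero_cokernel_of_epi _)

lemma zero_right_iff (hS : ∀ ⦃X Y : C⦄ (i : X ⟶ Y), Mono i → S Y → S X) :
    GabrielProd S IsZero M ↔ S M := by
  refine ⟨fun ⟨X₁, X₃, i, p, w, hse, hX₁, hX₃⟩ => ?_, fun hM => ?_⟩
  · have : Mono p := (ShortComplex.exact_iff_mono _ (hX₁.eq_of_src i 0)).1 hse.exact
    exact hS p this hX₃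
  · exact of_epi (𝟙 M) (isZero_kernel_of_mono _) hM

end GabrielProd

theorem gabrielProd_assoc_and_unit_general (S T U : C → Prop)
    (hS : IsTopologizing S) :
    (∀ M : C, GabrielProd S (GabrielProd T U) M ↔ GabrielProd (GabrielProd S T) U M) ∧
    (∀ M : C, GabrielProd (fun X : C => IsZero X) S M ↔ S M) ∧
    (∀ M : C, GabrielProd S (fun X : C => IsZero X) M ↔ S M) :=
  ⟨fun _ => GabrielProd.assoc, fun _ => GabrielProd.zero_left_iff hS.quot,
    fun _ => GabrielProd.zero_right_iff hS.sub⟩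

/-- The Gabriel product of topologizing subcategories is associative,
`S • (T • U) = (S • T) • U`, and the zero subcategory is a two-sided unit:
`0 • S = S = S • 0`. -/
theorem gabrielProd_assoc_and_unit (S T U : C → Prop)
    (hS : IsTopologizing S) (hT : IsTopologizing T) (hU : IsTopologizing U) :
    (∀ M : C, GabrielProd S (GabrielProd T U) M ↔ GabrielProd (GabrielProd S T) U M) ∧
    (∀ M : C, GabrielProd (fun X : C => IsZero X) S M ↔ S M) ∧
    (∀ M : C, GabrielProd S (fun X : C => IsZero X) M ↔ S M) :=
  gabrielProd_assoc_and_unit_general S T U hS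
end

section
/- Let B = B(P¹, O(1), σ) be the twisted homogeneous coordinate ring of the projective line with the automorphism σ(a₀ : a₁) = (q·a₀ : a₁) for q ∈ k*. Then B is isomorphic to the quantum plane k⟨x, y⟩/(xy − q·yx). -/
/-!
On `k[a₀, a₁]`, and more generally on any polynomial ring with a degree-preserving endomorphism
`σ`, the product `a ⬝ b = a σᵐ(b)` (`a` homogeneous of degree `m`) is associative: `σᵐ` is
multiplicative and `a ⬝ b` is homogeneous of degree `m + n`. For `σ(a₀ : a₁) = (q a₀ : a₁)` we have
`σⁿ(a₀ⁱ a₁ʲ) = qⁿⁱ a₀ⁱ a₁ʲ`, so the twisted product of two monomials is a nonzero multiple of their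
ordinary product, and `a₁ ⬝ a₀ = q a₀ ⬝ a₁`. Hence `x ↦ a₁`, `y ↦ a₀` defines a map from the quantum
plane; it sends the spanning family `yⁱ xʲ` to nonzero multiples of the monomial basis `a₀ⁱ a₁ʲ`,
so it is bijective.
-/

open MvPolynomial

/-- The automorphism `σ` of `k[a₀, a₁]` induced by the automorphism
`σ(a₀ : a₁) = (q·a₀ : a₁)` of `ℙ¹`. -/
noncomputable def projLineTwist (k : Type u) [Field k] (q : k) :
    MvPolynomial (Fin 2) k →ₐ[k] MvPolynomial (Fin 2) k :=
  aeval ![C q * X 0, X 1]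

/-- The defining relation `xy = q·yx` of the quantum plane. -/
inductive quantumPlaneRel (k : Type u) [Field k] (q : k) :
    FreeAlgebra k (Fin 2) → FreeAlgebra k (Fin 2) → Prop
  | rel : quantumPlaneRel k q (FreeAlgebra.ι k 0 * FreeAlgebra.ι k 1)
      (q • (FreeAlgebra.ι k 1 * FreeAlgebra.ι k 0))

noncomputable section

theorem Submodule.span_range_eq_top_of_mul_mem {R A ι : Type*} [CommSemiring R] [Semiring A]
    [Algebra R A] {s : Set A} (hs : Algebra.adjoin R s = ⊤) {v : ι → A}
    (hone : 1 ∈ span R (Set.range v))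
    (hmul : ∀ x ∈ s, ∀ i, x * v i ∈ span R (Set.range v)) :
    span R (Set.range v) = ⊤ := by
  set S := span R (Set.range v)
  have key : ∀ a ∈ Algebra.adjoin R s, ∀ t ∈ S, a * t ∈ S := by
    intro a ha
    induction ha using Algebra.adjoin_induction with
    | mem x hx =>
      have : S ≤ S.comap (LinearMap.mulLeft R x) :=
        span_le.2 (Set.range_subset_iff.2 (hmul x hx))
      exact fun t ht ↦ this ht
    | algebraMap r => exact fun t ht ↦ by rw [← Algebra.smul_def]; exact S.smul_mem r ht
    | add x y _ _ hx hy => exact fun t ht ↦ by rw [add_mul]; exact add_mem (hx t ht) (hy t ht)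
    | mul x y _ _ hx hy => exact fun t ht ↦ by rw [mul_assoc]; exact hx _ (hy t ht)
  refine eq_top_iff'.2 fun a ↦ ?_
  simpa using key a (hs ▸ Algebra.mem_top) 1 hone

theorem LinearMap.bijective_of_span_eq_top_of_apply_eq_units_smul {ι R M N : Type*} [Ring R]
    [AddCommGroup M] [Module R M] [AddCommGroup N] [Module R N] (f : M →ₗ[R] N) {v : ι → M}
    (hv : Submodule.span R (Set.range v) = ⊤) (b : Module.Basis ι R N) (u : ι → Rˣ)
    (hf : ∀ i, f (v i) = u i • b i) : Function.Bijective f := by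
  have hli : LinearIndependent R v := .of_comp f <| by
    convert (b.unitsSMul u).linearIndependent using 1
    ext i
    simp [hf, Module.Basis.unitsSMul_apply]
  let bv := Module.Basis.mk hli hv.ge
  have : f = (bv.equiv (b.unitsSMul u) (Equiv.refl ι)).toLinearMap :=
    bv.ext fun i ↦ by
      rw [LinearEquiv.coe_coe, Module.Basis.equiv_apply, Module.Basis.mk_apply, hf,
        Module.Basis.unitsSMul_apply, Equiv.refl_apply]
  exact this ▸ LinearEquiv.bijective _

namespace MvPolynomial

variable {ι R : Type*} [CommSemiring R]

def PreservesHomogeneous (σ : MvPolynomial ι R →ₐ[R] MvPolynomial ι R) : Prop :=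
  ∀ ⦃n : ℕ⦄ ⦃p : MvPolynomial ι R⦄, p.IsHomogeneous n → (σ p).IsHomogeneous n

theorem PreservesHomogeneous.pow {σ : MvPolynomial ι R →ₐ[R] MvPolynomial ι R}
    (hσ : PreservesHomogeneous σ) (k : ℕ) : PreservesHomogeneous (σ ^ k) := by
  induction k with
  | zero => exact fun _ _ hp ↦ hp
  | succ k ih => exact fun _ _ hp ↦ by rw [pow_succ', AlgHom.mul_apply]; exact hσ (ih hp)

variable (σ : MvPolynomial ι R →ₐ[R] MvPolynomial ι R)

def twistedMul : MvPolynomial ι R →ₗ[R] MvPolynomial ι R →ₗ[R] MvPolynomial ι R :=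
  (basisMonomials ι R).constr R fun d ↦
    LinearMap.mulLeft R (monomial d 1) ∘ₗ (σ ^ d.degree).toLinearMap

theorem twistedMul_monomial (d : ι →₀ ℕ) (c : R) (p : MvPolynomial ι R) :
    twistedMul σ (monomial d c) p = monomial d c * (σ ^ d.degree) p := by
  have hbasis : monomial d (1 : R) = basisMonomials ι R d := by rw [coe_basisMonomials]
  rw [← mul_one c, ← smul_eq_mul, ← smul_monomial, map_smul, LinearMap.smul_apply, hbasis,
    twistedMul, Module.Basis.constr_basis, ← hbasis]
  simp

theorem twistedMul_of_isHomogeneous {m : ℕ} {p : MvPolynomial ι R} (hp : p.IsHomogeneous m)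
    (r : MvPolynomial ι R) : twistedMul σ p r = p * (σ ^ m) r := by
  conv_lhs => rw [p.as_sum]
  rw [map_sum, LinearMap.coe_sum, Finset.sum_apply]
  conv_rhs => rw [p.as_sum, Finset.sum_mul]
  refine Finset.sum_congr rfl fun d hd ↦ ?_
  have hdeg : d.degree = m := by
    rw [Finsupp.degree_eq_weight_one]
    exact hp (mem_support_iff.mp hd)
  rw [twistedMul_monomial, hdeg]

theorem one_twistedMul (p : MvPolynomial ι R) : twistedMul σ 1 p = p := by
  simp [twistedMul_of_isHomogeneous σ (isHomogeneous_one ι R)]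

theorem twistedMul_one (p : MvPolynomial ι R) : twistedMul σ p 1 = p := by
  induction p using induction_on' with
  | monomial d c => rw [twistedMul_monomial, map_one, mul_one]
  | add p r hp hr => rw [map_add, LinearMap.add_apply, hp, hr]

variable {σ}

theorem twistedMul_assoc_of_isHomogeneous (hσ : PreservesHomogeneous σ) {m n : ℕ}
    {a b : MvPolynomial ι R} (ha : a.IsHomogeneous m) (hb : b.IsHomogeneous n)
    (c : MvPolynomial ι R) :
    twistedMul σ (twistedMul σ a b) c = twistedMul σ a (twistedMul σ b c) := by
  have hab : (twistedMul σ a b).IsHomogeneous (m + n) := by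
    rw [twistedMul_of_isHomogeneous σ ha]
    exact ha.mul (hσ.pow m hb)
  rw [twistedMul_of_isHomogeneous σ hab, twistedMul_of_isHomogeneous σ ha,
    twistedMul_of_isHomogeneous σ ha, twistedMul_of_isHomogeneous σ hb, map_mul, pow_add,
    AlgHom.mul_apply, mul_assoc]

theorem twistedMul_assoc (hσ : PreservesHomogeneous σ) (a b c : MvPolynomial ι R) :
    twistedMul σ (twistedMul σ a b) c = twistedMul σ a (twistedMul σ b c) := by
  induction a using induction_on' with
  | add a a' ha ha' => simp only [map_add, LinearMap.add_apply, ha, ha']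
  | monomial d r =>
    induction b using induction_on' with
    | add b b' hb hb' => simp only [map_add, LinearMap.add_apply, hb, hb']
    | monomial e s =>
      exact twistedMul_assoc_of_isHomogeneous hσ (isHomogeneous_monomial r rfl)
        (isHomogeneous_monomial s rfl) c

end MvPolynomial

/-- For linear `σ`, this is the twisted homogeneous coordinate ring `B(ℙⁿ, 𝒪(1), σ)`, with
`H⁰(ℙⁿ, 𝒪(m))` identified with the forms of degree `m`. -/
@[ext]
structure TwistedPoly {ι R : Type*} [CommSemiring R]
    (σ : MvPolynomial ι R →ₐ[R] MvPolynomial ι R) where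
  ofPoly ::
  toPoly : MvPolynomial ι R

namespace TwistedPoly

variable {ι R : Type*} [CommRing R] (σ : MvPolynomial ι R →ₐ[R] MvPolynomial ι R)

def equivPoly : TwistedPoly σ ≃ MvPolynomial ι R :=
  ⟨toPoly, ofPoly, fun _ ↦ rfl, fun _ ↦ rfl⟩

instance : AddCommGroup (TwistedPoly σ) := (equivPoly σ).addCommGroup

instance : Module R (TwistedPoly σ) := (equivPoly σ).module R

instance : One (TwistedPoly σ) := ⟨ofPoly 1⟩

instance : Mul (TwistedPoly σ) := ⟨fun a b ↦ ofPoly (twistedMul σ a.toPoly b.toPoly)⟩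

variable {σ}

@[simp] theorem toPoly_smul (c : R) (a : TwistedPoly σ) : (c • a).toPoly = c • a.toPoly := rfl
@[simp] theorem toPoly_one : (1 : TwistedPoly σ).toPoly = 1 := rfl
@[simp] theorem toPoly_mul (a b : TwistedPoly σ) :
    (a * b).toPoly = twistedMul σ a.toPoly b.toPoly := rfl

instance [Fact (PreservesHomogeneous σ)] : Ring (TwistedPoly σ) where
  __ := (inferInstance : AddCommGroup (TwistedPoly σ))
  mul_assoc _ _ _ := TwistedPoly.ext (twistedMul_assoc Fact.out _ _ _)
  one_mul _ := TwistedPoly.ext (one_twistedMul σ _)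
  mul_one _ := TwistedPoly.ext (twistedMul_one σ _)
  left_distrib _ _ _ := TwistedPoly.ext (map_add _ _ _)
  right_distrib _ _ _ := TwistedPoly.ext (LinearMap.map_add₂ _ _ _ _)
  zero_mul _ := TwistedPoly.ext (LinearMap.map_zero₂ _ _)
  mul_zero _ := TwistedPoly.ext (map_zero _)

instance [Fact (PreservesHomogeneous σ)] : Algebra R (TwistedPoly σ) :=
  Algebra.ofModule (fun _ _ _ ↦ TwistedPoly.ext (LinearMap.map_smul₂ _ _ _ _))
    (fun _ _ _ ↦ TwistedPoly.ext (map_smul _ _ _))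

variable (σ)

def linearEquivPoly : TwistedPoly σ ≃ₗ[R] MvPolynomial ι R :=
  { equivPoly σ with map_add' := fun _ _ ↦ rfl, map_smul' := fun _ _ ↦ rfl }

end TwistedPoly

open TwistedPoly

section ProjectiveLine

variable {k : Type*} [Field k]

theorem projLineTwist_preservesHomogeneous (q : k) : PreservesHomogeneous (projLineTwist k q) := by
  intro n p hp
  have hg : ∀ i, (![C q * X 0, X 1] i : MvPolynomial (Fin 2) k).IsHomogeneous 1 := by
    intro i
    fin_cases i
    exacts [isHomogeneous_C_mul_X q 0, isHomogeneous_X k 1]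
  have := hp.aeval ![C q * X 0, X 1] hg
  rwa [one_mul] at this

instance (q : k) : Fact (PreservesHomogeneous (projLineTwist k q)) :=
  ⟨projLineTwist_preservesHomogeneous q⟩

theorem projLineTwist_monomial (q : k) (d : Fin 2 →₀ ℕ) (c : k) :
    projLineTwist k q (monomial d c) = monomial d (q ^ d 0 * c) := by
  rw [projLineTwist, aeval_monomial, Finsupp.prod_fintype _ _ fun _ ↦ pow_zero _,
    Fin.prod_univ_two, monomial_eq, Finsupp.prod_fintype _ _ fun _ ↦ pow_zero _,
    Fin.prod_univ_two]
  simp only [Matrix.cons_val_zero, Matrix.cons_val_one, mul_pow, ← C_pow,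
    algebraMap_eq, C_mul]
  ring

theorem projLineTwist_pow_monomial (q : k) (n : ℕ) (d : Fin 2 →₀ ℕ) (c : k) :
    (projLineTwist k q ^ n) (monomial d c) = monomial d (q ^ (n * d 0) * c) := by
  induction n with
  | zero => simp
  | succ n ih => rw [pow_succ', AlgHom.mul_apply, ih, projLineTwist_monomial, ← mul_assoc,
      ← pow_add, add_mul, one_mul, add_comm]

theorem ofPoly_monomial_mul_ofPoly_monomial (q : k) (d e : Fin 2 →₀ ℕ) (a b : k) :
    (ofPoly (monomial d a) : TwistedPoly (projLineTwist k q)) * ofPoly (monomial e b) =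
      ofPoly (monomial (d + e) (q ^ (d.degree * e 0) * a * b)) := by
  ext1
  rw [toPoly_mul, twistedMul_monomial, projLineTwist_pow_monomial, monomial_mul]
  ring_nf

theorem exists_ofPoly_monomial_pow (q : kˣ) (d : Fin 2 →₀ ℕ) (n : ℕ) :
    ∃ u : kˣ, (ofPoly (monomial d 1) : TwistedPoly (projLineTwist k (q : k))) ^ n =
      ofPoly (monomial (n • d) (u : k)) := by
  induction n with
  | zero => exact ⟨1, by ext1; simp⟩
  | succ n ih =>
    obtain ⟨u, hu⟩ := ih
    refine ⟨q ^ ((n • d).degree * d 0) * u, ?_⟩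
    rw [pow_succ, hu, ofPoly_monomial_mul_ofPoly_monomial, succ_nsmul]
    push_cast
    ring_nf

end ProjectiveLine

abbrev QuantumPlane (k : Type*) [Field k] (q : k) := RingQuot (quantumPlaneRel k q)

namespace QuantumPlane

variable {k : Type*} [Field k]

section Generators

variable {q : k}

def x : QuantumPlane k q := RingQuot.mkAlgHom k _ (FreeAlgebra.ι k 0)

def y : QuantumPlane k q := RingQuot.mkAlgHom k _ (FreeAlgebra.ι k 1)

theorem x_mul_y : (x : QuantumPlane k q) * y = q • (y * x) := by
  have h := RingQuot.mkAlgHom_rel k (quantumPlaneRel.rel (k := k) (q := q))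
  rw [map_mul, map_smul, map_mul] at h
  exact h

theorem x_mul_y_pow (n : ℕ) : (x : QuantumPlane k q) * y ^ n = q ^ n • (y ^ n * x) := by
  induction n with
  | zero => simp
  | succ n ih => rw [pow_succ', ← mul_assoc, x_mul_y, smul_mul_assoc, mul_assoc, ih,
      mul_smul_comm, smul_smul, pow_succ', mul_assoc]

theorem adjoin_x_y : Algebra.adjoin k {(x : QuantumPlane k q), y} = ⊤ := by
  have hrange : Set.range (fun i ↦ RingQuot.mkAlgHom k (quantumPlaneRel k q) (FreeAlgebra.ι k i))
      = {x, y} := by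
    ext a
    simp [Fin.exists_fin_two, x, y, eq_comm]
  rw [← hrange, Set.range_comp', ← AlgHom.map_adjoin, FreeAlgebra.adjoin_range_ι,
    Algebra.map_top, AlgHom.range_eq_top]
  exact RingQuot.mkAlgHom_surjective k _

def orderedMonomial (d : Fin 2 →₀ ℕ) : QuantumPlane k q := y ^ d 0 * x ^ d 1

theorem span_orderedMonomial_eq_top :
    Submodule.span k (Set.range (orderedMonomial (q := q))) = ⊤ := by
  refine Submodule.span_range_eq_top_of_mul_mem adjoin_x_y
    (Submodule.subset_span ⟨0, by simp [orderedMonomial]⟩) ?_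
  rintro _ (rfl | rfl) d
  · have : x * orderedMonomial d =
        q ^ d 0 • orderedMonomial (q := q) (d + Finsupp.single 1 1) := by
      rw [orderedMonomial, ← mul_assoc, x_mul_y_pow, smul_mul_assoc, mul_assoc, ← pow_succ']
      simp [orderedMonomial]
    rw [this]
    exact Submodule.smul_mem _ _ (Submodule.subset_span ⟨_, rfl⟩)
  · have : y * orderedMonomial d = orderedMonomial (q := q) (d + Finsupp.single 0 1) := by
      rw [orderedMonomial, ← mul_assoc, ← pow_succ']
      simp [orderedMonomial]
    rw [this]
    exact Submodule.subset_span ⟨_, rfl⟩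

end Generators

def toTwistedPoly (q : k) : QuantumPlane k q →ₐ[k] TwistedPoly (projLineTwist k q) :=
  RingQuot.liftAlgHom k ⟨FreeAlgebra.lift k ![ofPoly (X 1), ofPoly (X 0)], fun a b h ↦ by
    cases h
    simp only [map_mul, map_smul, FreeAlgebra.lift_ι_apply, Matrix.cons_val_zero,
      Matrix.cons_val_one]
    rw [X, X, ofPoly_monomial_mul_ofPoly_monomial, ofPoly_monomial_mul_ofPoly_monomial, add_comm]
    ext1
    simp [smul_monomial]⟩

theorem toTwistedPoly_x (q : k) : toTwistedPoly q x = ofPoly (X 1) := by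
  simp [toTwistedPoly, x]

theorem toTwistedPoly_y (q : k) : toTwistedPoly q y = ofPoly (X 0) := by
  simp [toTwistedPoly, y]

theorem exists_toTwistedPoly_orderedMonomial (q : kˣ) (d : Fin 2 →₀ ℕ) :
    ∃ u : kˣ, toTwistedPoly (q : k) (orderedMonomial d) = ofPoly (monomial d (u : k)) := by
  obtain ⟨u, hu⟩ := exists_ofPoly_monomial_pow q (Finsupp.single 0 1) (d 0)
  obtain ⟨v, hv⟩ := exists_ofPoly_monomial_pow q (Finsupp.single 1 1) (d 1)
  refine ⟨u * v, ?_⟩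
  have hd : d 0 • Finsupp.single 0 1 + d 1 • Finsupp.single 1 1 = d := by
    ext i
    fin_cases i <;> simp
  rw [orderedMonomial, map_mul, map_pow, map_pow, toTwistedPoly_y, toTwistedPoly_x, X, X, hu, hv,
    ofPoly_monomial_mul_ofPoly_monomial, hd]
  simp

theorem toTwistedPoly_bijective (q : kˣ) : Function.Bijective (toTwistedPoly (q : k)) := by
  choose u hu using exists_toTwistedPoly_orderedMonomial q
  refine LinearMap.bijective_of_span_eq_top_of_apply_eq_units_smul
    (toTwistedPoly (q : k)).toLinearMap span_orderedMonomial_eq_top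
    ((basisMonomials (Fin 2) k).map (linearEquivPoly _).symm) u fun d ↦ ?_
  ext1
  simp [hu, linearEquivPoly, equivPoly, Units.smul_def, smul_monomial]

end QuantumPlane

end

theorem twisted_homogeneous_coordinate_ring_P1_iso_quantum_plane_general
    (k : Type) [Field k] (q : kˣ) :
    ∃ (B : Type) (_ : Ring B) (_ : Algebra k B)
      (e : B ≃ₗ[k] MvPolynomial (Fin 2) k),
      e 1 = 1 ∧
      (∀ (m : ℕ) (a b : B), e a ∈ homogeneousSubmodule (Fin 2) k m →
        e (a * b) = e a * ((⇑(projLineTwist k (q : k)))^[m] (e b))) ∧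
      Nonempty (RingQuot (quantumPlaneRel k (q : k)) ≃ₐ[k] B) := by
  refine ⟨TwistedPoly (projLineTwist k q), inferInstance, inferInstance,
    TwistedPoly.linearEquivPoly _, rfl, ?_,
    ⟨AlgEquiv.ofBijective _ (QuantumPlane.toTwistedPoly_bijective q)⟩⟩
  intro m a b ha
  rw [← AlgHom.coe_pow]
  exact twistedMul_of_isHomogeneous _ ((mem_homogeneousSubmodule _ _).1 ha) _

/-- Let `B = B(ℙ¹, 𝒪(1), σ)` be the twisted homogeneous coordinate ring of the
projective line with `σ(a₀ : a₁) = (q·a₀ : a₁)`, `q ∈ k*`.  Then `B` is isomorphic to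
the quantum plane `k⟨x, y⟩/(xy − q·yx)`.

Here `B` is encoded by its classical description: a graded `k`-algebra whose degree `n`
part is `H⁰(ℙ¹, 𝒪(n))`, identified `k`-linearly with the space of degree `n`
homogeneous polynomials in `k[a₀, a₁]` (so that, as a graded vector space, `B` is
identified with `k[a₀, a₁]`), with the twisted multiplication
`a·b = a ⊗ (σ^m)*(b)` for `a ∈ B_m`. -/
theorem twisted_homogeneous_coordinate_ring_P1_iso_quantum_plane
    (k : Type) [Field k] [IsAlgClosed k] (q : kˣ) :
    ∃ (B : Type) (_ : Ring B) (_ : Algebra k B)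
      (e : B ≃ₗ[k] MvPolynomial (Fin 2) k),
      e 1 = 1 ∧
      (∀ (m : ℕ) (a b : B), e a ∈ homogeneousSubmodule (Fin 2) k m →
        e (a * b) = e a * ((⇑(projLineTwist k (q : k)))^[m] (e b))) ∧
      Nonempty (RingQuot (quantumPlaneRel k (q : k)) ≃ₐ[k] B) :=
  twisted_homogeneous_coordinate_ring_P1_iso_quantum_plane_general k q
end

section
/- Let A be a connected N-graded k-algebra of finite Gelfand-Kirillov dimension. If GKdim(A) ≤ 2 then GKdim(A) ∈ {0, 1, 2} and in fact if GKdim(A) < 2 then GKdim(A) is either 0 or 1 (no values strictly between 1 and 2 are attained, Bergman's gap). -/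
/-!
Fix a basis of `V` and order words in its letters by shortlex. Call a word normal if its value is
not in the span of the values of shortlex-smaller words. Normal words form a factor-closed
language, and those of length at most `n` form a basis of `FⁿA`, so `dim FⁿA` is the growth
function of a factor-closed language over a finite alphabet.

For such a language, either some length carries no word, and then no longer length does (growth
bounded, exponent `0`), or every length carries one (growth at least `n`, exponent at least `1`).
If moreover some length `j` carries `m < j / 2` words, then among any `m + 1` consecutive windows
of length `j` in a word of the language two coincide, which gives a period `≤ m` there; these
overlapping local periods glue, so every long word is determined by a short prefix and suffix and
its period. The number of words of each length is then bounded and the growth is linear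
(exponent `1`). Otherwise length `j` carries at least `j / 2` words for every `j`, the growth is
quadratic, and the exponent is at least `2`.
-/

open Filter Finset Topology

namespace List

variable {α : Type*}

def HasPeriodOn (l : List α) (t a c : ℕ) : Prop :=
  ∀ i, a ≤ i → i + t < c → l[i + t]? = l[i]?

theorem HasPeriodOn.extend_left {l : List α} {t t' a a' c d : ℕ} (h' : l.HasPeriodOn t' a' d)
    (h : l.HasPeriodOn t a c) (ht : 0 < t) (hov : a' + t + t' ≤ min c d) :
    l.HasPeriodOn t' (min a a') d := by
  suffices ∀ k i, a' - i ≤ k → min a a' ≤ i → i + t' < d → l[i + t']? = l[i]? from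
    fun i => this _ i le_rfl
  intro k
  induction k with
  | zero => exact fun i hi _ hid => h' i (by omega) hid
  | succ k ih =>
    intro i hk hi hid
    by_cases hia : a' ≤ i
    · exact h' i hia hid
    -- below `a'`, move up by `t` along the first period until `[a', d)` is reached
    calc l[i + t']? = l[i + t' + t]? := (h (i + t') (by omega) (by omega)).symm
      _ = l[i + t + t']? := by rw [Nat.add_right_comm]
      _ = l[i + t]? := ih (i + t) (by omega) (by omega) (by omega)
      _ = l[i]? := h i (by omega) (by omega)

theorem eq_of_hasPeriodOn {l l' : List α} {t a c p q : ℕ} (hp : l.take p = l'.take p)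
    (hq : l.drop q = l'.drop q) (h : l.HasPeriodOn t a c) (h' : l'.HasPeriodOn t a c)
    (ht : 0 < t) (hap : a + t ≤ p) (hqc : q ≤ c) : l = l' := by
  refine ext_getElem? fun i => ?_
  induction i using Nat.strong_induction_on with
  | _ i ih =>
    by_cases hip : i < p
    · simpa [getElem?_take, hip] using congrArg (·[i]?) hp
    by_cases hiq : q ≤ i
    · simpa [getElem?_drop, hiq] using congrArg (·[i - q]?) hq
    obtain ⟨i, rfl⟩ : ∃ i', i = i' + t := ⟨i - t, by omega⟩
    rw [h i (by omega) (by omega), h' i (by omega) (by omega), ih i (by omega)]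

theorem Lex.append_right_of_length_eq {r : α → α → Prop} {s₁ s₂ : List α} (h : Lex r s₁ s₂)
    (hl : s₁.length = s₂.length) (t : List α) : Lex r (s₁ ++ t) (s₂ ++ t) := by
  induction h with
  | nil => simp at hl
  | cons h ih => exact .cons (ih (by simpa using hl))
  | rel h => exact .rel h

theorem Shortlex.append_right_mono {r : α → α → Prop} {s₁ s₂ : List α} (h : Shortlex r s₁ s₂)
    (t : List α) : Shortlex r (s₁ ++ t) (s₂ ++ t) := by
  rcases shortlex_def.1 h with hlt | ⟨hl, hlex⟩
  · exact .of_length_lt (by simpa using hlt)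
  · exact .of_lex (by simpa using hl) (hlex.append_right_of_length_eq hl t)

theorem shortlex_iff_toLex_lt [LinearOrder α] {s t : List α} :
    Shortlex (· < ·) s t ↔ toLex (s.length, s) < toLex (t.length, t) := by
  simp [shortlex_def, Prod.Lex.toLex_lt_toLex]

end List

section FactorClosed

variable {α : Type*}

def IsFactorClosed (L : Set (List α)) : Prop :=
  ∀ ⦃u v : List α⦄, u ∈ L → v <:+: u → v ∈ L

variable [Fintype α]

variable (α) in
def wordsOfLength (n : ℕ) : Finset (List α) :=
  (univ : Finset (List.Vector α n)).map ⟨List.Vector.toList, List.Vector.toList_injective⟩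

@[simp]
theorem mem_wordsOfLength {n : ℕ} {l : List α} : l ∈ wordsOfLength α n ↔ l.length = n := by
  simp only [wordsOfLength, Finset.mem_map, mem_univ, true_and, Function.Embedding.coeFn_mk]
  exact ⟨fun ⟨v, hv⟩ => hv ▸ v.toList_length, fun h => ⟨⟨l, h⟩, rfl⟩⟩

theorem card_wordsOfLength (n : ℕ) : #(wordsOfLength α n) = Fintype.card α ^ n := by
  rw [wordsOfLength, card_map, card_univ, card_vector]

open Classical in
noncomputable def lengthSlice (L : Set (List α)) (n : ℕ) : Finset (List α) :=
  {l ∈ wordsOfLength α n | l ∈ L}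

@[simp]
theorem mem_lengthSlice {L : Set (List α)} {n : ℕ} {l : List α} :
    l ∈ lengthSlice L n ↔ l.length = n ∧ l ∈ L := by
  simp [lengthSlice]

namespace IsFactorClosed

variable {L : Set (List α)} (hL : IsFactorClosed L)
include hL

theorem lengthSlice_eq_empty_of_le {m n : ℕ} (h : lengthSlice L m = ∅) (hmn : m ≤ n) :
    lengthSlice L n = ∅ := by
  refine eq_empty_of_forall_notMem fun l hl => ?_
  rw [mem_lengthSlice] at hl
  have hfac : l.take m ∈ lengthSlice L m :=
    mem_lengthSlice.2 ⟨by simp [hl.1, hmn], hL hl.2 (l.take_prefix m).isInfix⟩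
  simp [h] at hfac

/-- Pigeonhole on the `m + 1` windows of length `j` starting in `[s, s + m]`. -/
theorem exists_local_hasPeriodOn {j m : ℕ} (hm : #(lengthSlice L j) ≤ m) {l : List α}
    (hl : l ∈ L) {s : ℕ} (hs : s + m + j ≤ l.length) :
    ∃ a t, s ≤ a ∧ 0 < t ∧ a + t ≤ s + m ∧ l.HasPeriodOn t a (a + t + j) := by
  have hmaps : ∀ x ∈ Icc s (s + m), (l.drop x).take j ∈ lengthSlice L j := by
    intro x hx
    rw [mem_Icc] at hx
    refine mem_lengthSlice.2 ⟨by simp; omega, hL hl ?_⟩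
    exact ((l.drop x).take_prefix j).isInfix.trans (l.drop_suffix x).isInfix
  have hcard : #(lengthSlice L j) < #(Icc s (s + m)) := by simp; omega
  obtain ⟨x, hx, y, hy, hxy, hw⟩ := exists_ne_map_eq_of_card_lt_of_maps_to hcard hmaps
  rw [mem_Icc] at hx hy
  have period : ∀ x y, x < y → (l.drop x).take j = (l.drop y).take j →
      l.HasPeriodOn (y - x) x (x + (y - x) + j) := by
    intro x y hlt hw i hxi hi
    have := congrArg (·[i - x]?) hw
    simp only [List.getElem?_take, List.getElem?_drop, show i - x < j by omega, if_true] at this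
    rw [show y + (i - x) = i + (y - x) by omega, show x + (i - x) = i by omega] at this
    exact this.symm
  rcases Nat.lt_or_gt_of_ne hxy with hlt | hlt
  · exact ⟨x, y - x, hx.1, by omega, by omega, period x y hlt hw⟩
  · exact ⟨y, x - y, hy.1, by omega, by omega, period y x hlt hw.symm⟩

theorem exists_hasPeriodOn_up_to {j m : ℕ} (hm : #(lengthSlice L j) ≤ m) (hmj : 2 * m < j)
    {l : List α} (hl : l ∈ L) (s : ℕ) (hs : s + m + j ≤ l.length) :
    ∃ a t c, a ≤ m ∧ 0 < t ∧ t ≤ m ∧ s + j ≤ c ∧ l.HasPeriodOn t a c := by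
  induction s with
  | zero =>
    obtain ⟨a, t, -, ht, hat, h⟩ := hL.exists_local_hasPeriodOn hm hl (s := 0) (by omega)
    exact ⟨a, t, a + t + j, by omega, ht, by omega, by omega, h⟩
  | succ s ih =>
    obtain ⟨a, t, c, ha, ht, htm, hc, h⟩ := ih (by omega)
    obtain ⟨a', t', hsa', ht', hat', h'⟩ := hL.exists_local_hasPeriodOn hm hl hs
    -- as `2 * m < j`, the new local period overlaps the running one by at least `t + t'`
    exact ⟨min a a', t', a' + t' + j, by omega, ht', by omega, by omega,
      h'.extend_left h ht (by omega)⟩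

theorem card_lengthSlice_le {j m : ℕ} (hm : #(lengthSlice L j) ≤ m) (hmj : 2 * m < j) {n : ℕ}
    (hn : m + j ≤ n) :
    #(lengthSlice L n) ≤ (m + 1) * m * (Fintype.card α ^ (2 * m) * Fintype.card α ^ m) := by
  classical
  let S : ℕ × ℕ → Finset (List α) := fun p => {l ∈ lengthSlice L n | l.HasPeriodOn p.2 p.1 (n - m)}
  have hcover : lengthSlice L n ⊆ (range (m + 1) ×ˢ Icc 1 m).biUnion S := by
    intro l hl
    obtain ⟨hlen, hlL⟩ := mem_lengthSlice.1 hl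
    obtain ⟨a, t, c, ha, ht, htm, hc, h⟩ :=
      hL.exists_hasPeriodOn_up_to hm hmj hlL (n - m - j) (by omega)
    exact mem_biUnion.2 ⟨(a, t), by simp; omega, mem_filter.2 ⟨hl, fun i hi _ => h i hi (by omega)⟩⟩
  have hS : ∀ p ∈ range (m + 1) ×ˢ Icc 1 m,
      #(S p) ≤ Fintype.card α ^ (2 * m) * Fintype.card α ^ m := by
    rintro ⟨a, t⟩ hp
    simp only [mem_product, mem_range, mem_Icc] at hp
    have hinj : Set.InjOn (fun l : List α => (l.take (2 * m), l.drop (n - m))) (S (a, t)) := by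
      intro l hl l' hl' heq
      simp only [S, coe_filter, Set.mem_ofPred_eq] at hl hl'
      simp only [Prod.mk.injEq] at heq
      exact List.eq_of_hasPeriodOn heq.1 heq.2 hl.2 hl'.2 hp.2.1 (by omega) le_rfl
    calc #(S (a, t)) ≤ #(wordsOfLength α (2 * m) ×ˢ wordsOfLength α m) := by
          refine card_le_card_of_injOn _ (fun l hl => ?_) hinj
          simp only [S, coe_filter, Set.mem_ofPred_eq, mem_lengthSlice] at hl
          simp only [coe_product, Set.mem_prod, mem_coe, mem_wordsOfLength, List.length_take,
            List.length_drop, hl.1.1]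
          omega
      _ = _ := by rw [card_product, card_wordsOfLength, card_wordsOfLength]
  calc #(lengthSlice L n) ≤ #((range (m + 1) ×ˢ Icc 1 m).biUnion S) := card_le_card hcover
    _ ≤ ∑ p ∈ range (m + 1) ×ˢ Icc 1 m, #(S p) := card_biUnion_le
    _ ≤ #(range (m + 1) ×ˢ Icc 1 m) * (Fintype.card α ^ (2 * m) * Fintype.card α ^ m) :=
      sum_le_card_nsmul _ _ _ hS
    _ = _ := by simp

end IsFactorClosed

end FactorClosed

section GrowthExponent

/-- A real `limsup` of a sequence that is not bounded above is `0`, so super-polynomial growth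
gives exponent `0` here, not `∞`. -/
noncomputable def growthExponent (d : ℕ → ℕ) : ℝ :=
  limsup (fun n : ℕ => Real.log (d n) / Real.log n) atTop

theorem tendsto_log_div_log_natCast (C : ℝ) :
    Tendsto (fun n : ℕ => Real.log C / Real.log n) atTop (𝓝 0) :=
  tendsto_const_nhds.div_atTop (Real.tendsto_log_atTop.comp tendsto_natCast_atTop_atTop)

theorem log_div_log_natCast_nonneg (d n : ℕ) : 0 ≤ Real.log d / Real.log n :=
  div_nonneg (Real.log_natCast_nonneg d) (Real.log_natCast_nonneg n)

theorem growthExponent_nonneg (d : ℕ → ℕ) : 0 ≤ growthExponent d := by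
  by_cases hb : IsBoundedUnder (· ≤ ·) atTop fun n : ℕ => Real.log (d n) / Real.log n
  · exact le_limsup_of_frequently_le (.of_forall fun n => log_div_log_natCast_nonneg _ _) hb
  · rw [growthExponent, Real.limsup_of_not_isBoundedUnder hb]

theorem growthExponent_le_of_le_mul_pow {d : ℕ → ℕ} (e D : ℕ)
    (h : ∀ᶠ n in atTop, d n ≤ D * n ^ e) : growthExponent d ≤ e := by
  have hg : Tendsto (fun n : ℕ => e + Real.log D / Real.log n) atTop (𝓝 e) := by
    simpa using tendsto_const_nhds.add (tendsto_log_div_log_natCast D)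
  rw [← hg.limsup_eq]
  refine limsup_le_limsup ?_
    (isCoboundedUnder_le_of_le atTop fun n => log_div_log_natCast_nonneg _ _) hg.isBoundedUnder_le
  filter_upwards [h, eventually_ge_atTop 2] with n hn hn2
  have hlogn : 0 < Real.log n := Real.log_pos (by exact_mod_cast hn2)
  rcases Nat.eq_zero_or_pos (d n) with hd | hd
  · rw [hd, Nat.cast_zero, Real.log_zero, zero_div]
    exact add_nonneg (Nat.cast_nonneg e) (log_div_log_natCast_nonneg _ _)
  have hD : 0 < D := Nat.pos_of_mul_pos_right (hd.trans_le hn)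
  rw [div_le_iff₀ hlogn, add_mul, div_mul_cancel₀ _ hlogn.ne', ← Real.log_pow, add_comm,
    ← Real.log_mul (by positivity) (by positivity)]
  exact Real.log_le_log (by exact_mod_cast hd) (by exact_mod_cast hn)

theorem le_growthExponent_of_pow_le_mul {d : ℕ → ℕ} (e C : ℕ)
    (hb : IsBoundedUnder (· ≤ ·) atTop fun n : ℕ => Real.log (d n) / Real.log n)
    (h : ∀ᶠ n in atTop, n ^ e ≤ C * d n) : (e : ℝ) ≤ growthExponent d := by
  have hg : Tendsto (fun n : ℕ => e - Real.log C / Real.log n) atTop (𝓝 e) := by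
    simpa using tendsto_const_nhds.sub (tendsto_log_div_log_natCast C)
  rw [← hg.limsup_eq]
  refine limsup_le_limsup ?_ hg.isCoboundedUnder_le hb
  filter_upwards [h, eventually_ge_atTop 2] with n hn hn2
  have hlogn : 0 < Real.log n := Real.log_pos (by exact_mod_cast hn2)
  have hpos : 0 < C * d n := lt_of_lt_of_le (by positivity) hn
  have hC : 0 < C := Nat.pos_of_mul_pos_right hpos
  have hd : 0 < d n := Nat.pos_of_mul_pos_left hpos
  rw [sub_le_iff_le_add, ← add_div, le_div_iff₀ hlogn, ← Real.log_pow,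
    ← Real.log_mul (by positivity) (by positivity), mul_comm]
  exact Real.log_le_log (by positivity) (by exact_mod_cast hn)

theorem sum_range_le_sum_range_add_mul {p : ℕ → ℕ} {N B : ℕ} (h : ∀ i, N ≤ i → p i ≤ B)
    (n : ℕ) : ∑ i ∈ range n, p i ≤ ∑ i ∈ range N, p i + n * B := by
  rw [← sum_filter_add_sum_filter_not (range n) (· < N)]
  gcongr
  · exact fun i hi => by simp only [mem_filter, mem_range] at hi ⊢; omega
  · calc _ ≤ #{i ∈ range n | ¬ i < N} • B :=
          sum_le_card_nsmul _ _ _ fun i hi => h i (by simp at hi; omega)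
      _ ≤ n * B := by
        rw [smul_eq_mul]; gcongr; exact (card_filter_le _ _).trans (card_range n).le

theorem mul_succ_le_four_mul_sum_range {p : ℕ → ℕ} (h : ∀ j, j ≤ 2 * p j) (n : ℕ) :
    n * (n + 1) ≤ 4 * ∑ i ∈ range (n + 1), p i := by
  have hid := sum_range_id_mul_two (n + 1)
  have hle : ∑ i ∈ range (n + 1), i ≤ 2 * ∑ i ∈ range (n + 1), p i := by
    rw [mul_sum]; exact sum_le_sum fun i _ => h i
  simp only [Nat.add_sub_cancel] at hid
  nlinarith

end GrowthExponent

section GrowthOfFactorClosedLanguages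

variable {α : Type*} [Fintype α]

noncomputable def growthFunction (L : Set (List α)) (n : ℕ) : ℕ :=
  ∑ i ∈ range (n + 1), #(lengthSlice L i)

variable {L : Set (List α)}

theorem IsFactorClosed.growthExponent_growthFunction_eq_zero (hL : IsFactorClosed L) {m : ℕ}
    (hm : lengthSlice L m = ∅) : growthExponent (growthFunction L) = 0 := by
  have hzero : ∀ i, m ≤ i → #(lengthSlice L i) ≤ 0 := fun i hi => by
    simp [hL.lengthSlice_eq_empty_of_le hm hi]
  refine le_antisymm ?_ (growthExponent_nonneg _)
  exact_mod_cast growthExponent_le_of_le_mul_pow 0 _ (.of_forall fun n => by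
    simpa [growthFunction] using sum_range_le_sum_range_add_mul hzero (n + 1))

theorem IsFactorClosed.growthExponent_growthFunction_le_one (hL : IsFactorClosed L) {j : ℕ}
    (hj : 2 * #(lengthSlice L j) < j) : growthExponent (growthFunction L) ≤ 1 := by
  obtain ⟨B, hB⟩ : ∃ B, ∀ i, #(lengthSlice L j) + j ≤ i → #(lengthSlice L i) ≤ B :=
    ⟨_, fun i => hL.card_lengthSlice_le le_rfl hj⟩
  obtain ⟨S, hS⟩ : ∃ S, ∀ n, growthFunction L n ≤ S + (n + 1) * B :=
    ⟨_, fun n => sum_range_le_sum_range_add_mul hB (n + 1)⟩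
  have hlin : ∀ n, 1 ≤ n → growthFunction L n ≤ (S + 2 * B) * n ^ 1 := fun n hn => by
    nlinarith [hS n]
  exact_mod_cast growthExponent_le_of_le_mul_pow 1 _ (eventually_atTop.2 ⟨1, hlin⟩)

theorem one_le_growthExponent_growthFunction
    (hb : IsBoundedUnder (· ≤ ·) atTop fun n : ℕ => Real.log (growthFunction L n) / Real.log n)
    (h : ∀ m, (lengthSlice L m).Nonempty) : 1 ≤ growthExponent (growthFunction L) := by
  have hlower : ∀ n, n ^ 1 ≤ 1 * growthFunction L n := fun n => by
    simpa [growthFunction] using (card_nsmul_le_sum (range (n + 1)) _ 1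
      fun i _ => card_pos.2 (h i)).trans' (by simp)
  exact_mod_cast le_growthExponent_of_pow_le_mul 1 1 hb (.of_forall hlower)

theorem two_le_growthExponent_growthFunction
    (hb : IsBoundedUnder (· ≤ ·) atTop fun n : ℕ => Real.log (growthFunction L n) / Real.log n)
    (h : ∀ j, j ≤ 2 * #(lengthSlice L j)) : 2 ≤ growthExponent (growthFunction L) := by
  have hquad : ∀ n, n ^ 2 ≤ 4 * growthFunction L n := fun n => by
    have := mul_succ_le_four_mul_sum_range h n
    rw [growthFunction]
    nlinarith
  exact_mod_cast le_growthExponent_of_pow_le_mul 2 4 hb (.of_forall hquad)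

theorem IsFactorClosed.growthExponent_growthFunction_eq_zero_or_eq_one_or_two_le (hL : IsFactorClosed L) :
    growthExponent (growthFunction L) = 0 ∨ growthExponent (growthFunction L) = 1 ∨
      2 ≤ growthExponent (growthFunction L) := by
  by_cases hb : IsBoundedUnder (· ≤ ·) atTop
    fun n : ℕ => Real.log (growthFunction L n) / Real.log n
  · by_cases hempty : ∃ m, lengthSlice L m = ∅
    · obtain ⟨m, hm⟩ := hempty
      exact .inl (hL.growthExponent_growthFunction_eq_zero hm)
    push Not at hempty
    by_cases hsmall : ∃ j, 2 * #(lengthSlice L j) < j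
    · obtain ⟨j, hj⟩ := hsmall
      exact .inr (.inl ((hL.growthExponent_growthFunction_le_one hj).antisymm
        (one_le_growthExponent_growthFunction hb hempty)))
    · push Not at hsmall
      exact .inr (.inr (two_le_growthExponent_growthFunction hb hsmall))
  · exact .inl (Real.limsup_of_not_isBoundedUnder hb)

end GrowthOfFactorClosedLanguages

theorem linearIndepOn_of_notMem_span_image_lt {ι β K M : Type*} [DivisionRing K]
    [AddCommGroup M] [Module K M] [LinearOrder β] {v : ι → M} {f : ι → β}
    (hf : Function.Injective f) {s : Set ι}
    (h : ∀ i ∈ s, v i ∉ Submodule.span K (v '' {j | f j < f i})) : LinearIndepOn K v s := by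
  classical
  refine linearIndepOn_of_finite s fun t hts ht => ?_
  lift t to Finset ι using ht
  induction t using Finset.induction_on_max_value f with
  | empty => simp
  | insert a t hat hmax ih =>
    rw [coe_insert] at hts ⊢
    refine (ih ((Set.subset_insert a _).trans hts)).insert fun hmem =>
      h a (hts (Set.mem_insert a _)) (Submodule.span_mono (Set.image_mono ?_) hmem)
    exact fun x hx => (hmax x hx).lt_of_ne (hf.ne fun hxa => hat (hxa ▸ hx))

theorem LinearIndepOn.finrank_span_image_eq_card {ι K M : Type*} [DivisionRing K]
    [AddCommGroup M] [Module K M] {v : ι → M} {t : Finset ι} (h : LinearIndepOn K v (t : Set ι)) :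
    Module.finrank K (Submodule.span K (v '' t)) = #t := by
  rw [Set.image_eq_range, finrank_span_eq_card h]
  simp

section NormalWords

open Submodule

variable {A : Type*} [Ring A] {ι : Type*}

def evalWord (b : ι → A) (l : List ι) : A := (l.map b).prod

@[simp]
theorem evalWord_append (b : ι → A) (u v : List ι) :
    evalWord b (u ++ v) = evalWord b u * evalWord b v := by
  simp [evalWord]

variable (k : Type*) [Field k] [Algebra k A] (b : ι → A)

theorem span_range_pow_eq_span_evalWord (i : ℕ) :
    span k (Set.range b) ^ i = span k (evalWord b '' {x | x.length = i}) := by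
  induction i with
  | zero => simp [one_eq_span, evalWord, List.length_eq_zero_iff]
  | succ i ih =>
    rw [pow_succ, ih, span_mul_span]
    congr 1
    ext z
    constructor
    · rintro ⟨_, ⟨x, hx, rfl⟩, _, ⟨a, rfl⟩, rfl⟩
      exact ⟨x ++ [a], by simp_all, by simp [evalWord]⟩
    · rintro ⟨x, hx, rfl⟩
      obtain ⟨y, a, rfl⟩ := (List.eq_nil_or_concat' x).resolve_left (by rintro rfl; simp at hx)
      exact ⟨_, ⟨y, by simpa using hx, rfl⟩, _, ⟨a, rfl⟩, by simp [evalWord]⟩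

variable [LinearOrder ι]

def IsNormalWord (l : List ι) : Prop :=
  evalWord b l ∉ span k (evalWord b '' {x | List.Shortlex (· < ·) x l})

theorem isFactorClosed_isNormalWord : IsFactorClosed {l | IsNormalWord k b l} := by
  rintro _ v hw ⟨u, s, rfl⟩ hv
  let f : A →ₗ[k] A := LinearMap.mulRight k (evalWord b s) ∘ₗ LinearMap.mulLeft k (evalWord b u)
  have hf : ∀ x, f (evalWord b x) = evalWord b (u ++ x ++ s) := by simp [f, mul_assoc]
  have := mem_map_of_mem (f := f) hv
  rw [map_span, ← Set.image_comp, hf] at this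
  refine hw (span_mono ?_ this)
  rintro _ ⟨x, hx, rfl⟩
  exact ⟨u ++ x ++ s, (hx.append_left u).append_right_mono s, (hf x).symm⟩

theorem evalWord_mem_span_isNormalWord [WellFoundedLT ι] (l : List ι) :
    evalWord b l ∈ span k (evalWord b '' {x | IsNormalWord k b x ∧ x.length ≤ l.length}) := by
  have wf : WellFounded (List.Shortlex (α := ι) (· < ·)) := List.Shortlex.wf wellFounded_lt
  induction l using wf.induction with | _ l ih
  by_cases hl : IsNormalWord k b l
  · exact subset_span ⟨l, ⟨hl, le_rfl⟩, rfl⟩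
  refine span_le.2 ?_ (not_not.1 hl)
  rintro _ ⟨x, hx, rfl⟩
  have hlen : x.length ≤ l.length := by
    rcases List.shortlex_def.1 hx with h | h <;> omega
  refine span_mono (Set.image_mono ?_) (ih x hx)
  exact fun y hy => ⟨hy.1, hy.2.trans hlen⟩

theorem linearIndepOn_isNormalWord : LinearIndepOn k (evalWord b) {l | IsNormalWord k b l} := by
  refine linearIndepOn_of_notMem_span_image_lt (f := fun l => toLex (l.length, l))
    (fun x y h => congrArg Prod.snd (toLex.injective h)) fun l hl => ?_
  simp_rw [← List.shortlex_iff_toLex_lt]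
  exact hl

theorem iSup_span_range_pow_eq_span_isNormalWord [WellFoundedLT ι] (n : ℕ) :
    ⨆ i ∈ range (n + 1), span k (Set.range b) ^ i =
      span k (evalWord b '' {x | IsNormalWord k b x ∧ x.length ≤ n}) := by
  simp_rw [span_range_pow_eq_span_evalWord, ← span_iUnion₂]
  refine le_antisymm (span_le.2 ?_) (span_mono ?_)
  · rintro _ ⟨_, ⟨i, rfl⟩, _, ⟨hi, rfl⟩, x, rfl, rfl⟩
    refine span_mono (Set.image_mono ?_) (evalWord_mem_span_isNormalWord k b x)
    exact fun y hy => ⟨hy.1, hy.2.trans (by simpa [Nat.lt_succ_iff] using hi)⟩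
  · rintro _ ⟨x, hx, rfl⟩
    refine Set.mem_biUnion (x := x.length) ?_ ⟨x, rfl, rfl⟩
    simpa [Nat.lt_succ_iff] using hx.2

theorem finrank_iSup_span_range_pow_eq_growthFunction [WellFoundedLT ι] [Fintype ι] (n : ℕ) :
    Module.finrank k (⨆ i ∈ range (n + 1), span k (Set.range b) ^ i : Submodule k A) =
      growthFunction {l | IsNormalWord k b l} n := by
  classical
  let T := (range (n + 1)).biUnion (lengthSlice {l | IsNormalWord k b l})
  have hT : (T : Set (List ι)) = {x | IsNormalWord k b x ∧ x.length ≤ n} := by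
    ext x
    simp [T, and_comm]
  have hindep : LinearIndepOn k (evalWord b) (T : Set (List ι)) :=
    (linearIndepOn_isNormalWord k b).mono (by rw [hT]; exact fun x hx => hx.1)
  rw [iSup_span_range_pow_eq_span_isNormalWord, ← hT, hindep.finrank_span_image_eq_card,
    growthFunction, card_biUnion]
  intro i _ j _ hij
  exact disjoint_left.2 fun x hi hj =>
    hij ((mem_lengthSlice.1 hi).1.symm.trans (mem_lengthSlice.1 hj).1)

end NormalWords

theorem exists_isFactorClosed_finrank_iSup_pow_eq_growthFunction {k A : Type*} [Field k]
    [Ring A] [Algebra k A] (V : Submodule k A) [FiniteDimensional k V] :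
    ∃ (r : ℕ) (L : Set (List (Fin r))), IsFactorClosed L ∧ ∀ n,
      Module.finrank k (⨆ i ∈ range (n + 1), V ^ i : Submodule k A) = growthFunction L n := by
  let bV := Module.finBasis k V
  have hV : Submodule.span k (Set.range (V.subtype ∘ bV)) = V := by
    rw [Set.range_comp, ← Submodule.map_span, bV.span_eq, Submodule.map_subtype_top]
  refine ⟨_, _, isFactorClosed_isNormalWord k (V.subtype ∘ bV), fun n => ?_⟩
  rw [← finrank_iSup_span_range_pow_eq_growthFunction, hV]

theorem bergman_gap_general {k A : Type u} [Field k] [Ring A] [Algebra k A]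
    (V : Submodule k A) [FiniteDimensional k V]
    (gk : ℝ)
    (hgk : gk = limsup (fun n : ℕ =>
      Real.log (Module.finrank k (⨆ i ∈ Finset.range (n + 1), V ^ i : Submodule k A)) /
        Real.log n) atTop)
    (hle : gk ≤ 2) :
    gk ∈ ({0, 1, 2} : Set ℝ) ∧ (gk < 2 → gk = 0 ∨ gk = 1) := by
  obtain ⟨r, L, hL, hd⟩ := exists_isFactorClosed_finrank_iSup_pow_eq_growthFunction V
  have hgL : gk = growthExponent (growthFunction L) := by
    simp only [hgk, hd, growthExponent]
  rcases hL.growthExponent_growthFunction_eq_zero_or_eq_one_or_two_le with h | h | h <;> rw [← hgL] at h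
  · simp [h]
  · simp [h]
  · simp [le_antisymm hle h]

/-- Bergman's gap theorem for connected graded algebras.  Let `A` be a connected
`ℕ`-graded `k`-algebra, finitely generated by a finite-dimensional subspace `V` with
`k[V] = A`.  With `FⁿA = k + Σ_{i=1}^n Vⁱ`, the Gelfand–Kirillov dimension is
`GKdim(A) = limsup_n log(dim_k FⁿA)/log n`.  If `GKdim(A) ≤ 2` then
`GKdim(A) ∈ {0, 1, 2}`, and if `GKdim(A) < 2` then `GKdim(A)` is either `0` or `1`:
no values strictly between `1` and `2` (nor between `0` and `1`) are attained. -/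
theorem bergman_gap {k A : Type u} [Field k] [Ring A] [Algebra k A]
    (𝒜 : ℕ → Submodule k A) [GradedAlgebra 𝒜]
    (hconn : 𝒜 0 = (1 : Submodule k A))
    (V : Submodule k A) [FiniteDimensional k V]
    (hgen : Algebra.adjoin k (V : Set A) = ⊤)
    (gk : ℝ)
    (hgk : gk = limsup (fun n : ℕ =>
      Real.log (Module.finrank k (⨆ i ∈ Finset.range (n + 1), V ^ i : Submodule k A)) /
        Real.log n) atTop)
    (hle : gk ≤ 2) :
    gk ∈ ({0, 1, 2} : Set ℝ) ∧ (gk < 2 → gk = 0 ∨ gk = 1) :=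
  bergman_gap_general V gk hgk hle
end
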